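/- For the Hénon–Heiles potential V(x₁,x₂) = ½(x₁²+x₂²) + x₁²x₂ − ⅓x₂³, denote by V_{x₁}, V_{x₂} its first partial derivatives and by V_{x₁x₁}, V_{x₁x₂}, V_{x₂x₂} its second partial derivatives. Then the identity G := 2(1/6 − V)(V_{x₁x₁}V_{x₂x₂} − V_{x₁x₂}²) + V_{x₁x₁}V_{x₂}² + V_{x₂x₂}V_{x₁}² − 2V_{x₁}V_{x₂}V_{x₁x₂} = 2(1/6 − V)(1 − x₁² − x₂²) holds for all (x₁,x₂) ∈ ℝ². In particular G > 0 at every (x₁,x₂) with V(x₁,x₂) < 1/6 and x₁² + x₂² < 1. -/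

import Mathlib

/-- The Hénon–Heiles potential. -/
noncomputable def hhV (x₁ x₂ : ℝ) : ℝ := (x₁ ^ 2 + x₂ ^ 2) / 2 + x₁ ^ 2 * x₂ - x₂ ^ 3 / 3

/-- First partial derivative of `hhV` in `x₁`. -/
noncomputable def hhV₁ (x₁ x₂ : ℝ) : ℝ := deriv (fun t => hhV t x₂) x₁

/-- First partial derivative of `hhV` in `x₂`. -/
noncomputable def hhV₂ (x₁ x₂ : ℝ) : ℝ := deriv (fun t => hhV x₁ t) x₂

/-- Second partial derivative `∂²V/∂x₁²`. -/
noncomputable def hhV₁₁ (x₁ x₂ : ℝ) : ℝ := deriv (fun t => hhV₁ t x₂) x₁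

/-- Second partial derivative `∂²V/∂x₁∂x₂`. -/
noncomputable def hhV₁₂ (x₁ x₂ : ℝ) : ℝ := deriv (fun t => hhV₁ x₁ t) x₂

/-- Second partial derivative `∂²V/∂x₂²`. -/
noncomputable def hhV₂₂ (x₁ x₂ : ℝ) : ℝ := deriv (fun t => hhV₂ x₁ t) x₂

/-- The convexity quantity `G` for the Hénon–Heiles potential. -/
noncomputable def hhG (x₁ x₂ : ℝ) : ℝ :=
  2 * (1 / 6 - hhV x₁ x₂) * (hhV₁₁ x₁ x₂ * hhV₂₂ x₁ x₂ - hhV₁₂ x₁ x₂ ^ 2)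
    + hhV₁₁ x₁ x₂ * hhV₂ x₁ x₂ ^ 2 + hhV₂₂ x₁ x₂ * hhV₁ x₁ x₂ ^ 2
    - 2 * hhV₁ x₁ x₂ * hhV₂ x₁ x₂ * hhV₁₂ x₁ x₂

/-! The second partials of `V` are affine: `V₁₁ = 1 + 2x₂`, `V₁₂ = 2x₁`, `V₂₂ = 1 − 2x₂`. Hence the
Hessian determinant is `1 − 4r²` with `r² = x₁² + x₂²`, while the gradient term
`V₁₁V₂² + V₂₂V₁² − 2V₁V₂V₁₂` equals `6r²(1/6 − V)`; the two add up to `2(1/6 − V)(1 − r²)`. -/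

lemma hhV₁_eq (x₁ x₂ : ℝ) : hhV₁ x₁ x₂ = x₁ + 2 * x₁ * x₂ := by
  simp (disch := fun_prop) [hhV₁, hhV]
  ring

lemma hhV₂_eq (x₁ x₂ : ℝ) : hhV₂ x₁ x₂ = x₂ + x₁ ^ 2 - x₂ ^ 2 := by
  simp (disch := fun_prop) [hhV₂, hhV]
  ring

lemma hhV₁₁_eq (x₁ x₂ : ℝ) : hhV₁₁ x₁ x₂ = 1 + 2 * x₂ := by
  simp (disch := fun_prop) [hhV₁₁, hhV₁_eq]

lemma hhV₁₂_eq (x₁ x₂ : ℝ) : hhV₁₂ x₁ x₂ = 2 * x₁ := by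
  simp [hhV₁₂, hhV₁_eq]

lemma hhV₂₂_eq (x₁ x₂ : ℝ) : hhV₂₂ x₁ x₂ = 1 - 2 * x₂ := by
  simp [hhV₂₂, hhV₂_eq]

lemma hhG_eq (x₁ x₂ : ℝ) : hhG x₁ x₂ = 2 * (1 / 6 - hhV x₁ x₂) * (1 - x₁ ^ 2 - x₂ ^ 2) := by
  rw [hhG, hhV₁_eq, hhV₂_eq, hhV₁₁_eq, hhV₁₂_eq, hhV₂₂_eq, hhV]
  ring

lemma hhG_pos {x₁ x₂ : ℝ} (hV : hhV x₁ x₂ < 1 / 6) (hr : x₁ ^ 2 + x₂ ^ 2 < 1) :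
    0 < hhG x₁ x₂ := by
  rw [hhG_eq]
  have hV' : 0 < 1 / 6 - hhV x₁ x₂ := by linarith
  have hr' : 0 < 1 - x₁ ^ 2 - x₂ ^ 2 := by linarith
  positivity

theorem henonHeiles_convexity_identity :
    (∀ x₁ x₂ : ℝ, hhG x₁ x₂ = 2 * (1 / 6 - hhV x₁ x₂) * (1 - x₁ ^ 2 - x₂ ^ 2)) ∧
    (∀ x₁ x₂ : ℝ, hhV x₁ x₂ < 1 / 6 → x₁ ^ 2 + x₂ ^ 2 < 1 → 0 < hhG x₁ x₂) :=
  ⟨hhG_eq, fun _ _ => hhG_pos⟩
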